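/- arXiv:0810.0442 — 4 statements merged into one kernel-verified Lean document; each statement's English description precedes it below -/
import Mathlib

section
/- In a homological spark complex (F*, E*, I*), the homomorphism δ₂ : Ĥ^k(F) → H^{k+1}(I) sending a spark class (a, r) to [r] is surjective. -/
/-!
STATEMENT 6. In a homological spark complex `(F*, E*, I*)`, the homomorphism
`δ₂ : Ĥ^k(F) → H^{k+1}(I)`, sending a spark class `(a, r)` to `[r]`, is surjective.

Stated for degree `k = j+1`; `Ĥ^{j+1}(F)` is the group of spark classes
(`SparkGroup ⧸ SparkEquivSub` below) and `H^{j+2}(I) = ker dI ⧸ im dI`.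
-/

section SparkComplex

variable (F E I : ℕ → Type) [∀ k, AddCommGroup (F k)] [∀ k, AddCommGroup (E k)]
  [∀ k, AddCommGroup (I k)]
variable (dF : ∀ k, F k →+ F (k + 1)) (dI : ∀ k, I k →+ I (k + 1))
variable (ι : ∀ k, E k →+ F k) (Ψ : ∀ k, I k →+ F k)

/-- The group of sparks of degree `j+1`: pairs `(a, r)` with `da = e - Ψ r` for some `e`,
and `dr = 0`. -/
def SparkGroup (j : ℕ) : AddSubgroup (F (j + 1) × I (j + 1 + 1)) where
  carrier := {p | (∃ e : E (j + 1 + 1), dF (j + 1) p.1 = ι (j + 1 + 1) e - Ψ (j + 1 + 1) p.2) ∧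
    dI (j + 1 + 1) p.2 = 0}
  zero_mem' := ⟨⟨0, by simp⟩, by simp⟩
  add_mem' := by
    rintro p q ⟨⟨e, he⟩, hp⟩ ⟨⟨e', he'⟩, hq⟩
    refine ⟨⟨e + e', ?_⟩, ?_⟩
    · simp only [Prod.fst_add, Prod.snd_add, map_add, he, he']; abel
    · simp [Prod.snd_add, map_add, hp, hq]
  neg_mem' := by
    rintro p ⟨⟨e, he⟩, hp⟩
    refine ⟨⟨-e, ?_⟩, ?_⟩
    · simp only [Prod.fst_neg, Prod.snd_neg, map_neg, he]; abel
    · simp [map_neg, hp]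

/-- The subgroup of pairs `(db + Ψ s, -ds)` implementing spark equivalence in degree `j+1`. -/
def SparkEquivSub (j : ℕ) : AddSubgroup (F (j + 1) × I (j + 1 + 1)) where
  carrier := {p | ∃ (b : F j) (s : I (j + 1)),
    p.1 = dF j b + Ψ (j + 1) s ∧ p.2 = - dI (j + 1) s}
  zero_mem' := ⟨0, 0, by simp, by simp⟩
  add_mem' := by
    rintro p q ⟨b, s, h1, h2⟩ ⟨b', s', h1', h2'⟩
    refine ⟨b + b', s + s', ?_, ?_⟩
    · simp only [Prod.fst_add, map_add, h1, h1']; abel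
    · simp only [Prod.snd_add, map_add, h2, h2']; abel
  neg_mem' := by
    rintro p ⟨b, s, h1, h2⟩
    refine ⟨-b, -s, ?_, ?_⟩
    · simp only [Prod.fst_neg, map_neg, h1]; abel
    · simp only [Prod.snd_neg, map_neg, h2]

/-- The group `Ĥ^{j+1}(F)` of spark classes of degree `j+1`. -/
abbrev SparkClasses (j : ℕ) :=
  SparkGroup F E I dF dI ι Ψ j ⧸
    (SparkEquivSub F I dF dI Ψ j).addSubgroupOf (SparkGroup F E I dF dI ι Ψ j)

/-- The cohomology `H^{j+2}(I)` of the complex `I*`. -/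
abbrev CohomologyI (j : ℕ) :=
  (dI (j + 1 + 1)).ker ⧸ ((dI (j + 1)).range.addSubgroupOf (dI (j + 1 + 1)).ker)

end SparkComplex

theorem delta_two_surjective
    (F E I : ℕ → Type) [∀ k, AddCommGroup (F k)] [∀ k, AddCommGroup (E k)]
    [∀ k, AddCommGroup (I k)]
    (dF : ∀ k, F k →+ F (k + 1)) (dE : ∀ k, E k →+ E (k + 1)) (dI : ∀ k, I k →+ I (k + 1))
    (ι : ∀ k, E k →+ F k) (Ψ : ∀ k, I k →+ F k)
    (hdF : ∀ k (x : F k), dF (k + 1) (dF k x) = 0)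
    (hdE : ∀ k (x : E k), dE (k + 1) (dE k x) = 0)
    (hdI : ∀ k (x : I k), dI (k + 1) (dI k x) = 0)
    (hι : ∀ k, Function.Injective (ι k))
    (hιd : ∀ k (e : E k), dF k (ι k e) = ι (k + 1) (dE k e))
    (hΨd : ∀ k (r : I k), dF k (Ψ k r) = Ψ (k + 1) (dI k r))
    (hmeet : ∀ k, 0 < k → ∀ (r : I k) (e : E k), Ψ k r = ι k e → ι k e = 0)
    (hqis_surj : ∀ k (x : F (k + 1)), dF (k + 1) x = 0 →
      ∃ e : E (k + 1), dE (k + 1) e = 0 ∧ ∃ y : F k, x - ι (k + 1) e = dF k y)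
    (hqis_inj : ∀ k (e : E (k + 1)), dE (k + 1) e = 0 →
      (∃ y : F k, ι (k + 1) e = dF k y) → ∃ z : E k, e = dE k z)
    (hΨ0 : Function.Injective (Ψ 0))
    (j : ℕ) :
    ∃ δ₂ : SparkClasses F E I dF dI ι Ψ j →+ CohomologyI I dI j,
      (∀ p : SparkGroup F E I dF dI ι Ψ j,
        δ₂ (QuotientAddGroup.mk p) =
          QuotientAddGroup.mk ⟨p.1.2, AddMonoidHom.mem_ker.mpr p.2.2⟩) ∧
      Function.Surjective δ₂ := by

  classical
  -- the map on sparks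
  set f : SparkGroup F E I dF dI ι Ψ j →+ (dI (j + 1 + 1)).ker :=
    { toFun := fun p => ⟨p.1.2, AddMonoidHom.mem_ker.mpr p.2.2⟩
      map_zero' := rfl
      map_add' := fun p q => rfl } with hf
  have hker : ∀ p ∈ (SparkEquivSub F I dF dI Ψ j).addSubgroupOf
      (SparkGroup F E I dF dI ι Ψ j),
      ((QuotientAddGroup.mk' (((dI (j + 1)).range.addSubgroupOf (dI (j + 1 + 1)).ker))).comp f) p = 0 := by
    rintro ⟨p, hp⟩ hmem
    obtain ⟨b, s, h1, h2⟩ := hmem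
    simp only [AddMonoidHom.comp_apply, QuotientAddGroup.mk'_apply]
    rw [QuotientAddGroup.eq_zero_iff]
    refine ⟨-s, ?_⟩
    simp only [map_neg]
    exact h2.symm
  refine ⟨QuotientAddGroup.lift _ ((QuotientAddGroup.mk' (((dI (j + 1)).range.addSubgroupOf (dI (j + 1 + 1)).ker))).comp f) hker, ?_, ?_⟩
  · intro p; rfl
  · intro x
    induction x using QuotientAddGroup.induction_on with
    | H rc =>
      obtain ⟨r, hr⟩ := rc
      have hr' : dI (j + 1 + 1) r = 0 := hr
      have hclosed : dF (j + 1 + 1) (Ψ (j + 1 + 1) r) = 0 := by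
        rw [hΨd, hr', map_zero]
      obtain ⟨e, he, y, hy⟩ := hqis_surj (j + 1) (Ψ (j + 1 + 1) r) hclosed
      refine ⟨QuotientAddGroup.mk ⟨(-y, r), ⟨e, ?_⟩, hr'⟩, rfl⟩
      rw [map_neg, ← hy]; abel
end

section
/- In a homological spark complex (F*, E*, I*), the homomorphism δ₁ : Ĥ^k(F) → Z^{k+1}_I(E) sending a spark class (a, r) to its smooth part e (where da = e - Ψ(r)) is surjective. -/
/-- The subgroup `Z^{j+2}_I(E)` of closed elements of `E^{j+2}` with class in the image
of `Ψ_*`. -/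
def ZIE (F E I : ℕ → Type) [∀ k, AddCommGroup (F k)] [∀ k, AddCommGroup (E k)]
    [∀ k, AddCommGroup (I k)]
    (dF : ∀ k, F k →+ F (k + 1)) (dE : ∀ k, E k →+ E (k + 1)) (dI : ∀ k, I k →+ I (k + 1))
    (ι : ∀ k, E k →+ F k) (Ψ : ∀ k, I k →+ F k) (j : ℕ) :
    AddSubgroup (E (j + 1 + 1)) where
  carrier := {e | dE (j + 1 + 1) e = 0 ∧ ∃ r₀ : I (j + 1 + 1), dI (j + 1 + 1) r₀ = 0 ∧
    ∃ y : F (j + 1), ι (j + 1 + 1) e - Ψ (j + 1 + 1) r₀ = dF (j + 1) y}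
  zero_mem' := ⟨by simp, 0, by simp, 0, by simp⟩
  add_mem' := by
    rintro e e' ⟨he, r, hr, y, hy⟩ ⟨he', r', hr', y', hy'⟩
    refine ⟨by simp [map_add, he, he'], r + r', by simp [map_add, hr, hr'], y + y', ?_⟩
    simp only [map_add]
    rw [← hy, ← hy']; abel
  neg_mem' := by
    rintro e ⟨he, r, hr, y, hy⟩
    refine ⟨by simp [map_neg, he], -r, by simp [map_neg, hr], -y, ?_⟩
    simp only [map_neg]
    rw [← hy]; abel

theorem delta_one_surjective
    (F E I : ℕ → Type) [∀ k, AddCommGroup (F k)] [∀ k, AddCommGroup (E k)]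
    [∀ k, AddCommGroup (I k)]
    (dF : ∀ k, F k →+ F (k + 1)) (dE : ∀ k, E k →+ E (k + 1)) (dI : ∀ k, I k →+ I (k + 1))
    (ι : ∀ k, E k →+ F k) (Ψ : ∀ k, I k →+ F k)
    (hdF : ∀ k (x : F k), dF (k + 1) (dF k x) = 0)
    (hdE : ∀ k (x : E k), dE (k + 1) (dE k x) = 0)
    (hdI : ∀ k (x : I k), dI (k + 1) (dI k x) = 0)
    (hι : ∀ k, Function.Injective (ι k))
    (hιd : ∀ k (e : E k), dF k (ι k e) = ι (k + 1) (dE k e))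
    (hΨd : ∀ k (r : I k), dF k (Ψ k r) = Ψ (k + 1) (dI k r))
    (hmeet : ∀ k, 0 < k → ∀ (r : I k) (e : E k), Ψ k r = ι k e → ι k e = 0)
    (hqis_surj : ∀ k (x : F (k + 1)), dF (k + 1) x = 0 →
      ∃ e : E (k + 1), dE (k + 1) e = 0 ∧ ∃ y : F k, x - ι (k + 1) e = dF k y)
    (hqis_inj : ∀ k (e : E (k + 1)), dE (k + 1) e = 0 →
      (∃ y : F k, ι (k + 1) e = dF k y) → ∃ z : E k, e = dE k z)
    (hΨ0 : Function.Injective (Ψ 0))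
    (j : ℕ) :
    ∃ δ₁ : SparkClasses F E I dF dI ι Ψ j →+ ZIE F E I dF dE dI ι Ψ j,
      (∀ (p : SparkGroup F E I dF dI ι Ψ j) (e : E (j + 1 + 1)),
        dF (j + 1) p.1.1 = ι (j + 1 + 1) e - Ψ (j + 1 + 1) p.1.2 →
        (δ₁ (QuotientAddGroup.mk p) : E (j + 1 + 1)) = e) ∧
      Function.Surjective δ₁ := by
  classical
  -- the smooth part of a spark, via choice
  let φ0 : SparkGroup F E I dF dI ι Ψ j → E (j + 1 + 1) := fun p => p.2.1.choose
  have hφ0 : ∀ p : SparkGroup F E I dF dI ι Ψ j,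
      dF (j + 1) (p : F (j+1) × I (j+1+1)).1
        = ι (j+1+1) (φ0 p) - Ψ (j+1+1) (p : F (j+1) × I (j+1+1)).2 :=
    fun p => p.2.1.choose_spec
  have huniq : ∀ (p : SparkGroup F E I dF dI ι Ψ j) (e : E (j + 1 + 1)),
      dF (j + 1) (p : F (j+1) × I (j+1+1)).1
        = ι (j+1+1) e - Ψ (j+1+1) (p : F (j+1) × I (j+1+1)).2 → φ0 p = e := by
    intro p e he
    apply hι (j+1+1)
    have h1 := hφ0 p
    have : ι (j+1+1) (φ0 p) - Ψ (j+1+1) (p : F (j+1) × I (j+1+1)).2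
        = ι (j+1+1) e - Ψ (j+1+1) (p : F (j+1) × I (j+1+1)).2 := by rw [← h1, ← he]
    exact sub_left_injective this
  have hmem : ∀ p : SparkGroup F E I dF dI ι Ψ j, φ0 p ∈ ZIE F E I dF dE dI ι Ψ j := by
    intro p
    have he := hφ0 p
    have hr : dI (j+1+1) (p : F (j+1) × I (j+1+1)).2 = 0 := p.2.2
    have hclosed : dE (j+1+1) (φ0 p) = 0 := by
      apply hι (j+1+1+1)
      rw [← hιd, map_zero]
      have : dF (j+1+1) (ι (j+1+1) (φ0 p))
          = dF (j+1+1) (dF (j+1) (p : F (j+1) × I (j+1+1)).1)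
            + dF (j+1+1) (Ψ (j+1+1) (p : F (j+1) × I (j+1+1)).2) := by
        rw [← map_add]
        congr 1
        rw [he]; abel
      rw [this, hdF, hΨd, hr, map_zero, zero_add]
    exact ⟨hclosed, (p : F (j+1) × I (j+1+1)).2, hr, (p : F (j+1) × I (j+1+1)).1,
      by rw [← he]⟩
  -- the hom on sparks
  let φ : SparkGroup F E I dF dI ι Ψ j →+ ZIE F E I dF dE dI ι Ψ j :=
    AddMonoidHom.mk' (fun p => ⟨φ0 p, hmem p⟩) (by
      intro p q
      ext
      show φ0 (p + q) = φ0 p + φ0 q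
      apply huniq
      have hp := hφ0 p; have hq := hφ0 q
      have hco : ((p + q : SparkGroup F E I dF dI ι Ψ j) : F (j+1) × I (j+1+1))
          = (p : F (j+1) × I (j+1+1)) + (q : F (j+1) × I (j+1+1)) := rfl
      rw [hco, Prod.fst_add, Prod.snd_add, map_add, hp, hq, map_add, map_add]
      abel)
  -- descends to the quotient
  have hker : ∀ p ∈ (SparkEquivSub F I dF dI Ψ j).addSubgroupOf
      (SparkGroup F E I dF dI ι Ψ j), φ p = 0 := by
    intro p hp
    obtain ⟨b, s, h1, h2⟩ := hp
    ext
    show φ0 p = (0 : E (j+1+1))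
    apply huniq
    have h1' : (p : F (j+1) × I (j+1+1)).1 = dF j b + Ψ (j+1) s := h1
    have h2' : (p : F (j+1) × I (j+1+1)).2 = - dI (j+1) s := h2
    rw [map_zero, zero_sub, h1', h2', map_add, hdF, hΨd, map_neg, neg_neg, zero_add]
  refine ⟨QuotientAddGroup.lift _ φ hker, ?_, ?_⟩
  · intro p e he
    show ((φ p : ZIE F E I dF dE dI ι Ψ j) : E (j+1+1)) = e
    exact huniq p e he
  · intro e
    obtain ⟨hclosed, r, hr, y, hy⟩ := e.2
    have hpmem : ((y, r) : F (j+1) × I (j+1+1)) ∈ SparkGroup F E I dF dI ι Ψ j :=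
      ⟨⟨e, by rw [← hy]⟩, hr⟩
    refine ⟨QuotientAddGroup.mk ⟨(y, r), hpmem⟩, ?_⟩
    have : φ0 ⟨(y, r), hpmem⟩ = (e : E (j+1+1)) := huniq _ _ (by rw [← hy])
    exact Subtype.ext this
end

section
/- Let X be a smooth complex projective variety of dimension n with a Kähler metric, and let c be a closed integral current on X of dimension 2p+k whose components lie only in bidimensions (p+r, p+s) with r+s = k and |r-s| ≤ k. Then the harmonic part H(c) has no components in bidimension (p+r, p+s) with r > k+1; consequently the Hodge spark (a, c) with a = -Ψ(d*G(c)) satisfies δ₁(â) = 0 in the spark complex of level q = n-p-k-1, i.e. the spark class â lies in the Deligne cohomology H^{2(n-p)-k}_D(X, ℤ(n-p-k-1)). -/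
/-!
A component of `c` of bidimension `(p+r, p+(k-r))` with `r > k+1` has `|r - (k-r)| = 2r - k > k`,
so it vanishes by hypothesis; the harmonic projection commutes with the bidegree projections, so
`H c` has no such components either.  The truncation `Ψ` sees only those components, hence
`Ψ (H c) = 0`.
-/

theorem Int.not_abs_sub_sub_le_of_lt {k r : ℤ} (h : k < r) : ¬ |r - (k - r)| ≤ k := by
  rw [abs_le, not_and_or]
  right
  omega

section Bidegree

variable {V : Type*} [AddCommGroup V] (π : ℤ → (V →+ V))

theorem bidegree_component_map_eq_zero {f : V →+ V} (hf : ∀ r x, π r (f x) = f (π r x))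
    {r : ℤ} {x : V} (hx : π r x = 0) : π r (f x) = 0 := by
  rw [hf, hx, map_zero]

theorem truncation_eq_zero_of_components_eq_zero (hsep : ∀ x y : V, (∀ r, π r x = π r y) → x = y)
    {Ψ : V →+ V} {m : ℤ} (hΨgt : ∀ r, m < r → ∀ x, π r (Ψ x) = π r x)
    (hΨle : ∀ r, r ≤ m → ∀ x, π r (Ψ x) = 0) {x : V} (hx : ∀ r, m < r → π r x = 0) :
    Ψ x = 0 :=
  hsep _ 0 fun r => by
    rw [map_zero]
    rcases le_or_gt r m with h | h
    · exact hΨle r h x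
    · rw [hΨgt r h, hx r h]

end Bidegree

theorem harmonic_part_type_vanishing_and_delta_one_zero_general
    (k : ℤ)
    (V : Type*) [AddCommGroup V]
    (π : ℤ → (V →+ V)) (H Ψ : V →+ V)
    (hsep : ∀ x y : V, (∀ r, π r x = π r y) → x = y)
    -- Kähler: harmonic projection preserves the bidegree decomposition
    (hH : ∀ r x, π r (H x) = H (π r x))
    -- `Ψ` is the truncation keeping exactly the components of `δ₁` (those with `r > k+1`)
    (hΨgt : ∀ r, k + 1 < r → ∀ x, π r (Ψ x) = π r x)
    (hΨle : ∀ r, r ≤ k + 1 → ∀ x, π r (Ψ x) = 0)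
    -- `c` has components only in bidimensions `(p+r, p+s)`, `r+s = k`, `|r-s| ≤ k`
    (c : V)
    (hc : ∀ r : ℤ, ¬ |r - (k - r)| ≤ k → π r c = 0) :
    (∀ r : ℤ, k + 1 < r → π r (H c) = 0) ∧ Ψ (H c) = 0 := by
  have hvanish : ∀ r : ℤ, k + 1 < r → π r (H c) = 0 := fun r hr =>
    bidegree_component_map_eq_zero π hH (hc r (Int.not_abs_sub_sub_le_of_lt (by omega)))
  exact ⟨hvanish, truncation_eq_zero_of_components_eq_zero π hsep hΨgt hΨle hvanish⟩

theorem harmonic_part_type_vanishing_and_delta_one_zero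
    (n p : ℕ) (k : ℤ)
    (V : Type*) [AddCommGroup V]
    (π : ℤ → (V →+ V)) (H Ψ : V →+ V)
    (hidem : ∀ r x, π r (π r x) = π r x)
    (horth : ∀ r r', r ≠ r' → ∀ x, π r (π r' x) = 0)
    (hsep : ∀ x y : V, (∀ r, π r x = π r y) → x = y)
    -- Kähler: harmonic projection preserves the bidegree decomposition
    (hH : ∀ r x, π r (H x) = H (π r x))
    -- `Ψ` is the truncation keeping exactly the components of `δ₁` (those with `r > k+1`)
    (hΨgt : ∀ r, k + 1 < r → ∀ x, π r (Ψ x) = π r x)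
    (hΨle : ∀ r, r ≤ k + 1 → ∀ x, π r (Ψ x) = 0)
    -- `c` has components only in bidimensions `(p+r, p+s)`, `r+s = k`, `|r-s| ≤ k`
    (c : V)
    (hc : ∀ r : ℤ, ¬ |r - (k - r)| ≤ k → π r c = 0) :
    (∀ r : ℤ, k + 1 < r → π r (H c) = 0) ∧ Ψ (H c) = 0 :=
  harmonic_part_type_vanishing_and_delta_one_zero_general k V π H Ψ hsep hH hΨgt hΨle c hc
end

section
/- In a homological spark complex (F*, E*, I*), the intersection ker δ₁ ∩ ker δ₂ ⊂ Ĥ^k(F) is isomorphic to H^k(F)/H^k_I(F), where H^k_I(F) denotes the image of Ψ_* : H^k(I) → H^k(F): every spark class with vanishing smooth part and nullcohomologous integral part is represented by a d-closed element a ∈ F^k, well-defined modulo dF^{k-1} + Ψ(Z^k(I)). -/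
variable (F E I : ℕ → Type) [∀ k, AddCommGroup (F k)] [∀ k, AddCommGroup (E k)]
  [∀ k, AddCommGroup (I k)]
  (dF : ∀ k, F k →+ F (k + 1)) (dI : ∀ k, I k →+ I (k + 1))
  (ι : ∀ k, E k →+ F k) (Ψ : ∀ k, I k →+ F k)

/-- The subgroup `dF^{j} + Ψ(Z^{j+1}(I))` of `F^{j+1}`. -/
abbrev ModSub (j : ℕ) : AddSubgroup (F (j + 1)) :=
  (dF j).range ⊔ AddSubgroup.map (Ψ (j + 1)) (dI (j + 1)).ker

/-- The quotient `H^{j+1}(F) ⧸ Ψ_*H^{j+1}(I) = Z^{j+1}(F) ⧸ (dF^j + Ψ(Z^{j+1}(I)))`. -/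
abbrev HFmodHI (j : ℕ) :=
  (dF (j + 1)).ker ⧸ ((ModSub F I dF dI Ψ j).addSubgroupOf (dF (j + 1)).ker)

/-- `ker δ₁ ∩ ker δ₂`: spark classes represented by a spark with vanishing smooth part and
whose integral part is a boundary. -/
def KerBoth (j : ℕ) : AddSubgroup (SparkClasses F E I dF dI ι Ψ j) where
  carrier := {x | ∃ p : SparkGroup F E I dF dI ι Ψ j,
    QuotientAddGroup.mk p = x ∧
    dF (j + 1) p.1.1 = - Ψ (j + 1 + 1) p.1.2 ∧ p.1.2 ∈ (dI (j + 1)).range}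
  zero_mem' := ⟨0, by simp, by simp, by exact ⟨0, by simp⟩⟩
  add_mem' := by
    rintro x y ⟨p, hp, h0, hr⟩ ⟨q, hq, h0', hr'⟩
    refine ⟨p + q, ?_, ?_, ?_⟩
    · rw [← hp, ← hq]; rfl
    · simp only [AddSubgroup.coe_add, Prod.fst_add, Prod.snd_add, map_add, h0, h0']; abel
    · simp only [AddSubgroup.coe_add, Prod.snd_add]
      exact add_mem hr hr'
  neg_mem' := by
    rintro x ⟨p, hp, h0, hr⟩
    refine ⟨-p, ?_, ?_, ?_⟩
    · rw [← hp]; rfl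
    · simp only [AddSubgroup.coe_neg, Prod.fst_neg, Prod.snd_neg, map_neg, h0]
    · simp only [AddSubgroup.coe_neg, Prod.snd_neg]
      exact neg_mem hr

section ClosedSparks

variable {F E I dF dI ι Ψ} {j : ℕ}

def closedSpark : (dF (j + 1)).ker →+ SparkGroup F E I dF dI ι Ψ j where
  toFun a := ⟨(a, 0), ⟨⟨0, by simp [AddMonoidHom.mem_ker.mp a.2]⟩, by simp⟩⟩
  map_zero' := rfl
  map_add' a b := by ext <;> simp

@[simp]
theorem coe_closedSpark (a : (dF (j + 1)).ker) :
    ((closedSpark a : SparkGroup F E I dF dI ι Ψ j) : F (j + 1) × I (j + 1 + 1)) =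
      ((a : F (j + 1)), 0) :=
  rfl

theorem mk_closedSpark_eq_zero_iff (a : (dF (j + 1)).ker) :
    (QuotientAddGroup.mk (closedSpark a) : SparkClasses F E I dF dI ι Ψ j) = 0 ↔
      (a : F (j + 1)) ∈ ModSub F I dF dI Ψ j := by
  rw [QuotientAddGroup.eq_zero_iff, AddSubgroup.mem_addSubgroupOf, AddSubgroup.mem_sup]
  constructor
  · rintro ⟨b, s, ha, hs⟩
    have hs : dI (j + 1) s = 0 := neg_eq_zero.mp hs.symm
    exact ⟨dF j b, ⟨b, rfl⟩, Ψ (j + 1) s, ⟨s, hs, rfl⟩, ha.symm⟩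
  · rintro ⟨_, ⟨b, rfl⟩, _, ⟨s, hs, rfl⟩, ha⟩
    exact ⟨b, s, ha.symm, by simp [AddMonoidHom.mem_ker.mp hs]⟩

theorem exists_mk_closedSpark_eq_mk (hΨd : ∀ k (r : I k), dF k (Ψ k r) = Ψ (k + 1) (dI k r))
    (p : SparkGroup F E I dF dI ι Ψ j) (s : I (j + 1))
    (hp : dF (j + 1) p.1.1 = -Ψ (j + 1 + 1) p.1.2) (hs : dI (j + 1) s = p.1.2) :
    ∃ ha : dF (j + 1) (p.1.1 + Ψ (j + 1) s) = 0,
      (QuotientAddGroup.mk (closedSpark ⟨_, ha⟩) : SparkClasses F E I dF dI ι Ψ j) =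
        QuotientAddGroup.mk p := by
  have ha : dF (j + 1) (p.1.1 + Ψ (j + 1) s) = 0 := by rw [map_add, hp, hΨd, hs, neg_add_cancel]
  refine ⟨ha, QuotientAddGroup.eq.mpr ?_⟩
  rw [AddSubgroup.mem_addSubgroupOf]
  refine ⟨0, -s, ?_, ?_⟩
  · change -(p.1.1 + Ψ (j + 1) s) + p.1.1 = dF j 0 + Ψ (j + 1) (-s)
    simp only [map_zero, map_neg, zero_add, neg_add_rev, neg_add_cancel_right]
  · change -(0 : I (j + 1 + 1)) + p.1.2 = -dI (j + 1) (-s)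
    simp [hs]

theorem mk_closedSpark_mem_kerBoth (a : (dF (j + 1)).ker) :
    (QuotientAddGroup.mk (closedSpark a) : SparkClasses F E I dF dI ι Ψ j) ∈
      KerBoth F E I dF dI ι Ψ j :=
  ⟨closedSpark a, rfl, by simp [AddMonoidHom.mem_ker.mp a.2], ⟨0, by simp⟩⟩

def closedSparkClass : (dF (j + 1)).ker →+ KerBoth F E I dF dI ι Ψ j :=
  ((QuotientAddGroup.mk' _).comp closedSpark).codRestrict _ mk_closedSpark_mem_kerBoth

theorem closedSparkClass_surjective
    (hΨd : ∀ k (r : I k), dF k (Ψ k r) = Ψ (k + 1) (dI k r)) :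
    Function.Surjective (closedSparkClass : _ →+ KerBoth F E I dF dI ι Ψ j) := by
  rintro ⟨x, p, rfl, hp, s, hs⟩
  obtain ⟨ha, h⟩ := exists_mk_closedSpark_eq_mk hΨd p s hp hs
  exact ⟨⟨_, ha⟩, Subtype.ext h⟩

theorem ker_closedSparkClass :
    (closedSparkClass : _ →+ KerBoth F E I dF dI ι Ψ j).ker =
      (ModSub F I dF dI Ψ j).addSubgroupOf (dF (j + 1)).ker := by
  ext a
  exact Subtype.ext_iff.trans (mk_closedSpark_eq_zero_iff a)

end ClosedSparks

theorem ker_delta_one_inter_ker_delta_two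
    (F E I : ℕ → Type) [∀ k, AddCommGroup (F k)] [∀ k, AddCommGroup (E k)]
    [∀ k, AddCommGroup (I k)]
    (dF : ∀ k, F k →+ F (k + 1)) (dI : ∀ k, I k →+ I (k + 1))
    (ι : ∀ k, E k →+ F k) (Ψ : ∀ k, I k →+ F k)
    (hΨd : ∀ k (r : I k), dF k (Ψ k r) = Ψ (k + 1) (dI k r))
    (j : ℕ) :
    -- every class in `ker δ₁ ∩ ker δ₂` is represented by a `d`-closed `a ∈ F^{j+1}`
    (∀ x : SparkClasses F E I dF dI ι Ψ j, x ∈ KerBoth F E I dF dI ι Ψ j →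
      ∃ (a : F (j + 1)) (ha : dF (j + 1) a = 0),
        QuotientAddGroup.mk
          (⟨(a, 0), ⟨⟨0, by simp [ha]⟩, by simp⟩⟩ : SparkGroup F E I dF dI ι Ψ j) = x) ∧
    -- the representative is well defined modulo `dF^{j} + Ψ(Z^{j+1}(I))`
    (∀ (a a' : F (j + 1)) (ha : dF (j + 1) a = 0) (ha' : dF (j + 1) a' = 0),
      (QuotientAddGroup.mk
          (⟨(a, 0), ⟨⟨0, by simp [ha]⟩, by simp⟩⟩ : SparkGroup F E I dF dI ι Ψ j) :
        SparkClasses F E I dF dI ι Ψ j) =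
      QuotientAddGroup.mk
          (⟨(a', 0), ⟨⟨0, by simp [ha']⟩, by simp⟩⟩ : SparkGroup F E I dF dI ι Ψ j) →
      a - a' ∈ ModSub F I dF dI Ψ j) ∧
    -- and this sets up an isomorphism `ker δ₁ ∩ ker δ₂ ≅ H^{j+1}(F)/H^{j+1}_I(F)`
    Nonempty ((KerBoth F E I dF dI ι Ψ j) ≃+ HFmodHI F I dF dI Ψ j) := by
  have hsurj := closedSparkClass_surjective (E := E) (ι := ι) (j := j) hΨd
  refine ⟨fun x hx => ?_, fun a a' ha ha' h => ?_, ?_⟩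
  · obtain ⟨a, ha⟩ := hsurj ⟨x, hx⟩
    exact ⟨a, a.2, congrArg Subtype.val ha⟩
  · have h : (QuotientAddGroup.mk (closedSpark (⟨a, ha⟩ - ⟨a', ha'⟩)) :
        SparkClasses F E I dF dI ι Ψ j) = 0 := by
      rw [map_sub, QuotientAddGroup.mk_sub, sub_eq_zero]
      exact h
    exact (mk_closedSpark_eq_zero_iff _).mp h
  · exact ⟨(QuotientAddGroup.quotientKerEquivOfSurjective _ hsurj).symm.trans
      (QuotientAddGroup.quotientAddEquivOfEq ker_closedSparkClass)⟩
end
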